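/- arXiv:2602.17142 — 2 statements merged into one kernel-verified Lean document; each statement's English description precedes it below -/
import Mathlib

section
/- Characterisation of transitivity of conditional-writes elements: assume Val has at least two distinct elements. For any i : 𝒱 → D, the relation γ×(i) is transitive if and only if for every variable v ∈ 𝒱 and every transition (s₁, s₂) ∈ γ×(i), if s₁ ∉ γ(i v) then s₂ ∉ γ(i v). In other words, transitivity fails exactly when i captures a transition from a state outside the write-condition of some variable v into a state inside the write-condition of v. -/
/-- Concretisation of an interference element of the conditional-writes domain. -/
def gammaX {Val 𝒱 D : Type} (γ : D → Set (𝒱 → Val)) (i : 𝒱 → D) :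
    Set ((𝒱 → Val) × (𝒱 → Val)) :=
  {p | ∀ v, p.2 v ≠ p.1 v → p.1 ∈ γ (i v)}

/-- Characterisation of transitivity of conditional-writes elements: `γ×(i)` is
transitive if and only if no transition in `γ×(i)` goes from a state outside the
write-condition of some variable `v` to a state inside it. -/
theorem gammaX_transitive_iff {Val 𝒱 D : Type} [Nontrivial Val]
    (γ : D → Set (𝒱 → Val)) (i : 𝒱 → D) :
    (∀ s₁ s₂ s₃ : 𝒱 → Val,
        (s₁, s₂) ∈ gammaX γ i → (s₂, s₃) ∈ gammaX γ i → (s₁, s₃) ∈ gammaX γ i) ↔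
    (∀ (v : 𝒱) (s₁ s₂ : 𝒱 → Val),
        (s₁, s₂) ∈ gammaX γ i → s₁ ∉ γ (i v) → s₂ ∉ γ (i v)) := by
  classical
  constructor
  · intro htrans v s₁ s₂ h12 h1 h2
    obtain ⟨c, hc⟩ := exists_ne (s₁ v)
    set s₃ : 𝒱 → Val := fun w => if w = v then c else s₂ w with hs₃
    have h23 : (s₂, s₃) ∈ gammaX γ i := by
      intro w hw
      by_cases hwv : w = v
      · subst hwv; exact h2
      · simp [hs₃, hwv] at hw
    have h13 := htrans s₁ s₂ s₃ h12 h23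
    exact h1 (h13 v (by simp [hs₃, hc]))
  · intro hchar s₁ s₂ s₃ h12 h23 v hv
    by_contra h1
    by_cases h : s₂ v = s₁ v
    · exact hchar v s₁ s₂ h12 h1 (h23 v (by simpa [h] using hv))
    · exact h1 (h12 v h)
end

section
/- Existence of a violating write-condition witness (key step in the transitivity proof): let i : 𝒱 → D and suppose (s₁, s₂) ∈ γ×(i), (s₂, s₃) ∈ γ×(i), but (s₁, s₃) ∉ γ×(i). Then there exists a variable v̂ ∈ 𝒱 such that s₁ ∉ γ(i v̂), s₂ ∈ γ(i v̂), s₁ v̂ = s₂ v̂, and s₃ v̂ ≠ s₁ v̂. -/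
/-- Existence of a violating write-condition witness: if transitivity fails on
`(s₁, s₂)` and `(s₂, s₃)`, then there is a variable `vhat` with `s₁ ∉ γ(i vhat)`,
`s₂ ∈ γ(i vhat)`, `s₁ vhat = s₂ vhat` and `s₃ vhat ≠ s₁ vhat`. -/
theorem violating_witness {Val 𝒱 D : Type} (γ : D → Set (𝒱 → Val)) (i : 𝒱 → D)
    (s₁ s₂ s₃ : 𝒱 → Val)
    (h₁₂ : (s₁, s₂) ∈ gammaX γ i) (h₂₃ : (s₂, s₃) ∈ gammaX γ i)
    (h₁₃ : (s₁, s₃) ∉ gammaX γ i) :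
    ∃ vhat : 𝒱, s₁ ∉ γ (i vhat) ∧ s₂ ∈ γ (i vhat) ∧ s₁ vhat = s₂ vhat ∧ s₃ vhat ≠ s₁ vhat := by
  simp only [gammaX, Set.mem_setOf_eq, not_forall] at h₁₃
  obtain ⟨v, hne, hnot⟩ := h₁₃
  have heq : s₁ v = s₂ v := by
    by_contra h
    exact hnot (h₁₂ v (fun h' => h (h'.symm)))
  refine ⟨v, hnot, h₂₃ v ?_, heq, hne⟩
  simpa [← heq] using hne
end
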